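/- Let H be a ℚ-vector space and P[i] (i ∈ ℤ) a family of linear operators on H = ⊕_{n∈ℤ} H_n such that P[i] maps H_n to H_{n−i}. Suppose that for fixed α-pairings there are constants c_{i,n} with [P_α[i], P_β[−i]]·v = c_{i,n}·⟨α,β⟩·v for all v ∈ H_n, and that [P_γ[k], [P_α[i], P_β[−i]]] = 0 whenever k ≠ ±i. If moreover for every pair (n, k) with k ∈ {1} (case i ≠ 1) or k ∈ {2, 3} (case i = 1) there exist α, β, γ, v ∈ H_n with ⟨α,β⟩ ≠ 0 and P_γ[k]v ≠ 0, then c_{i,n} is independent of n. -/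

import Mathlib

/-!
If `Q` commutes with `C` and `C` acts on `v` and on `Q v ≠ 0` by scalars, the two scalars agree.
Taking `C = [P_α[i], P_β[-i]]` and `Q = P_γ[k]`, which lowers the degree by `k`, this gives
`c_{i,n} = c_{i,n-k}` whenever `k ≠ ±i`, i.e. `c_i` is `k`-periodic. For `i ≠ ±1` use `k = 1`;
otherwise `c_i` is `2`- and `3`-periodic, hence `1`-periodic.
-/

theorem Module.End.smul_eq_of_commute {R M : Type*} [CommRing R] [IsDomain R] [AddCommGroup M]
    [Module R M] [Module.IsTorsionFree R M] {C Q : Module.End R M} (hQC : Commute Q C)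
    {v : M} {a b : R} (hv : C v = a • v) (hQv : C (Q v) = b • Q v) (hQv_ne : Q v ≠ 0) :
    a = b :=
  smul_left_injective R hQv_ne <| by
    calc a • Q v = Q (C v) := by rw [hv, map_smul]
      _ = C (Q v) := LinearMap.congr_fun hQC v
      _ = b • Q v := hQv

theorem periodic_of_commute_of_degree_shift {R V A : Type*} [CommRing R] [IsDomain R]
    [AddCommGroup V] [Module R V] [Module.IsTorsionFree R V]
    (H : ℤ → Submodule R V) (pair : A → A → R) (C : A → A → Module.End R V)
    (Q : A → Module.End R V) (c : ℤ → R) {k : ℤ}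
    (hshift : ∀ γ n, ∀ v ∈ H n, Q γ v ∈ H (n - k))
    (hC : ∀ α β n, ∀ v ∈ H n, C α β v = (c n * pair α β) • v)
    (hcomm : ∀ α β γ, Commute (Q γ) (C α β))
    (hex : ∀ n, ∃ α β γ, ∃ v ∈ H n, pair α β ≠ 0 ∧ Q γ v ≠ 0) :
    Function.Periodic c k := by
  intro n
  obtain ⟨α, β, γ, v, hv, hpair, hQv⟩ := hex (n + k)
  have hQv_mem : Q γ v ∈ H n := by simpa using hshift γ (n + k) v hv
  exact mul_right_cancel₀ hpair <|
    Module.End.smul_eq_of_commute (hcomm α β γ) (hC α β _ v hv) (hC α β n _ hQv_mem) hQv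

/-- **Independence of the Heisenberg constants from the grading degree.**
Let `V = ⊕_n H_n` be a graded `ℚ`-vector space and `P_α[i]` (`α` in an index type `A`,
`i ∈ ℤ`) a family of operators such that `P_α[i]` maps `H_n` to `H_{n−i}`.  Suppose there
are constants `c_{i,n}` with `[P_α[i], P_β[−i]] v = c_{i,n}·⟨α,β⟩·v` for all `v ∈ H_n`,
and `[P_γ[k], [P_α[i], P_β[−i]]] = 0` whenever `k ≠ ±i`.  If moreover for every `n` and
every `k ∈ {1, 2, 3}` there exist `α, β, γ` and `v ∈ H_n` with `⟨α,β⟩ ≠ 0` and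
`P_γ[k] v ≠ 0`, then `c_{i,n}` is independent of `n`. -/
theorem heisenberg_constant_independent_of_degree
    {V : Type*} [AddCommGroup V] [Module ℚ V] {A : Type*}
    (H : ℤ → Submodule ℚ V) (pair : A → A → ℚ) (P : A → ℤ → Module.End ℚ V)
    (c : ℤ → ℤ → ℚ)
    (hshift : ∀ (α : A) (i n : ℤ), ∀ v ∈ H n, P α i v ∈ H (n - i))
    (hcomm : ∀ (α β : A) (i n : ℤ), ∀ v ∈ H n,
      (P α i * P β (-i) - P β (-i) * P α i) v = (c i n * pair α β) • v)
    (hzero : ∀ (α β γ : A) (i k : ℤ), k ≠ i → k ≠ -i →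
      P γ k * (P α i * P β (-i) - P β (-i) * P α i) =
        (P α i * P β (-i) - P β (-i) * P α i) * P γ k)
    (hex : ∀ (n k : ℤ), k = 1 ∨ k = 2 ∨ k = 3 →
      ∃ (α β γ : A), ∃ v ∈ H n, pair α β ≠ 0 ∧ P γ k v ≠ 0) :
    ∀ i n m : ℤ, c i n = c i m := by
  intro i n m
  have periodic : ∀ k : ℤ, k = 1 ∨ k = 2 ∨ k = 3 → k ≠ i → k ≠ -i → Function.Periodic (c i) k :=
    fun k hk hki hki' => periodic_of_commute_of_degree_shift H pair
      (fun α β => P α i * P β (-i) - P β (-i) * P α i) (P · k) (c i)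
      (fun γ n => hshift γ k n) (fun α β => hcomm α β i)
      (fun α β γ => hzero α β γ i k hki hki') (fun n => hex n k hk)
  have periodic_one : Function.Periodic (c i) 1 := by
    by_cases hi : 1 ≠ i ∧ 1 ≠ -i
    · exact periodic 1 (by norm_num) hi.1 hi.2
    · have h3 := periodic 3 (by norm_num) (by omega) (by omega)
      have h2 := periodic 2 (by norm_num) (by omega) (by omega)
      simpa using h3.sub_period h2
  simpa using periodic_one.int_mul (n - m) m
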